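/- arXiv:2409.15726 — 4 statements merged into one kernel-verified Lean document; each statement's English description precedes it below -/
import Mathlib

section
/- Let X be a topological space and let k be a positive integer. If X is selectively k-star-ccc, then X is k-star-Lindelöf. (In particular, every selectively star-ccc space is star-Lindelöf.) -/
open Set

namespace SelStar

variable {X : Type*}

/-- The star of a set `A` with respect to a family `𝒰`:
`st(A,𝒰) = ⋃ {U ∈ 𝒰 : U ∩ A ≠ ∅}`. -/
def st (𝒰 : Set (Set X)) (A : Set X) : Set X :=
  ⋃₀ {u ∈ 𝒰 | (u ∩ A).Nonempty}

/-- Iterated star: `stIter 𝒰 A n = st^n(A,𝒰)`, with `st^0(A,𝒰) = A`. -/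
def stIter (𝒰 : Set (Set X)) (A : Set X) : ℕ → Set X
  | 0 => A
  | n + 1 => st 𝒰 (stIter 𝒰 A n)

/-- `𝒰` is an open cover of `X`. -/
def IsOpenCover [TopologicalSpace X] (𝒰 : Set (Set X)) : Prop :=
  (∀ u ∈ 𝒰, IsOpen u) ∧ ⋃₀ 𝒰 = univ

/-- A cellular family: a family of nonempty pairwise disjoint open sets. -/
def Cellular [TopologicalSpace X] (𝒜 : Set (Set X)) : Prop :=
  (∀ A ∈ 𝒜, IsOpen A ∧ A.Nonempty) ∧ 𝒜.Pairwise Disjoint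

/-- A maximal cellular family: a cellular family not properly contained in
any other cellular family. -/
def MaximalCellular [TopologicalSpace X] (𝒜 : Set (Set X)) : Prop :=
  Cellular 𝒜 ∧ ∀ ℬ : Set (Set X), Cellular ℬ → 𝒜 ⊆ ℬ → ℬ = 𝒜

/-- `X` is selectively `k`-star-ccc. -/
def SelectivelyKStarCCC (X : Type*) [TopologicalSpace X] (k : ℕ) : Prop :=
  ∀ 𝒰 : Set (Set X), IsOpenCover 𝒰 →
    ∀ 𝒜 : ℕ → Set (Set X), (∀ n, MaximalCellular (𝒜 n)) →
      ∃ A : ℕ → Set X, (∀ n, A n ∈ 𝒜 n) ∧ stIter 𝒰 (⋃ n, A n) k = univ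

/-- `X` is `k`-star-Lindelöf. -/
def KStarLindelof (X : Type*) [TopologicalSpace X] (k : ℕ) : Prop :=
  ∀ 𝒰 : Set (Set X), IsOpenCover 𝒰 →
    ∃ 𝒱 ⊆ 𝒰, 𝒱.Countable ∧ stIter 𝒰 (⋃₀ 𝒱) k = univ

/-- The countable chain condition: every cellular family is countable. -/
def CCC (X : Type*) [TopologicalSpace X] : Prop :=
  ∀ 𝒜 : Set (Set X), Cellular 𝒜 → 𝒜.Countable

/-- `X` is weakly Lindelöf. -/
def WeaklyLindelof (X : Type*) [TopologicalSpace X] : Prop :=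
  ∀ 𝒰 : Set (Set X), IsOpenCover 𝒰 →
    ∃ 𝒱 ⊆ 𝒰, 𝒱.Countable ∧ Dense (⋃₀ 𝒱)

/-- `X` is `ω`-star-Lindelöf. -/
def OmegaStarLindelof (X : Type*) [TopologicalSpace X] : Prop :=
  ∀ 𝒰 : Set (Set X), IsOpenCover 𝒰 →
    ∃ k : ℕ, 0 < k ∧ ∃ 𝒱 ⊆ 𝒰, 𝒱.Countable ∧ stIter 𝒰 (⋃₀ 𝒱) k = univ

/-- `X` is selectively `ω`-star-ccc. -/
def SelectivelyOmegaStarCCC (X : Type*) [TopologicalSpace X] : Prop :=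
  ∀ 𝒰 : Set (Set X), IsOpenCover 𝒰 →
    ∀ 𝒜 : ℕ → Set (Set X), (∀ n, MaximalCellular (𝒜 n)) →
      ∃ A : ℕ → Set X, (∀ n, A n ∈ 𝒜 n) ∧
        ∃ k : ℕ, 0 < k ∧ stIter 𝒰 (⋃ n, A n) k = univ

/-- A discrete family: every point has a neighborhood meeting at most one member. -/
def DiscreteFamily (X : Type*) [TopologicalSpace X] (𝒜 : Set (Set X)) : Prop :=
  ∀ x : X, ∃ N ∈ nhds x, {A ∈ 𝒜 | (A ∩ N).Nonempty}.Subsingleton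

/-- The discrete countable chain condition: every discrete family of nonempty
open sets is countable. -/
def DCCC (X : Type*) [TopologicalSpace X] : Prop :=
  ∀ 𝒜 : Set (Set X), (∀ A ∈ 𝒜, IsOpen A ∧ A.Nonempty) →
    DiscreteFamily X 𝒜 → 𝒜.Countable

/-- `X` is weakly strongly star-Lindelöf (weakly star countable). -/
def WeaklySSL (X : Type*) [TopologicalSpace X] : Prop :=
  ∀ 𝒰 : Set (Set X), IsOpenCover 𝒰 →
    ∃ A : Set X, A.Countable ∧ Dense (st 𝒰 A)

/-- `X` is strongly `1`-star-Lindelöf (SSL). -/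
def SSL (X : Type*) [TopologicalSpace X] : Prop :=
  ∀ 𝒰 : Set (Set X), IsOpenCover 𝒰 →
    ∃ A : Set X, A.Countable ∧ st 𝒰 A = univ

/-- `X` is selectively ccc. -/
def SelectivelyCCC (X : Type*) [TopologicalSpace X] : Prop :=
  ∀ 𝒜 : ℕ → Set (Set X), (∀ n, MaximalCellular (𝒜 n)) →
    ∃ A : ℕ → Set X, (∀ n, A n ∈ 𝒜 n) ∧ Dense (⋃ n, A n)

/-- `X` is countably compact: every countable open cover has a finite subcover. -/
def CountablyCompact (X : Type*) [TopologicalSpace X] : Prop :=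
  ∀ 𝒰 : Set (Set X), 𝒰.Countable → IsOpenCover 𝒰 →
    ∃ ℱ ⊆ 𝒰, ℱ.Finite ∧ ⋃₀ ℱ = univ

end SelStar

open SelStar

/-!
Refine the open cover by a maximal cellular family (Zorn's lemma) and apply selective
`k`-star-ccc to the constant sequence of that family. Each selected cell lies in some member of
the cover, and those countably many members star the whole space in `k` steps.
-/

namespace SelStar

variable {X : Type*}

theorem st_mono (𝒰 : Set (Set X)) : Monotone (st 𝒰) := fun _ _ hAB =>
  sUnion_mono fun _ ⟨hu, hne⟩ => ⟨hu, hne.mono (inter_subset_inter_right _ hAB)⟩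

theorem stIter_mono (𝒰 : Set (Set X)) : ∀ n, Monotone fun A => stIter 𝒰 A n
  | 0 => fun _ _ hAB => hAB
  | n + 1 => fun _ _ hAB => st_mono 𝒰 (stIter_mono 𝒰 n hAB)

variable [TopologicalSpace X] {𝒜 : Set (Set X)}

theorem Cellular.insert (h𝒜 : Cellular 𝒜) {V : Set X} (hV : IsOpen V) (hVne : V.Nonempty)
    (hdisj : ∀ A ∈ 𝒜, Disjoint A V) : Cellular (insert V 𝒜) := by
  refine ⟨?_, pairwise_insert.2 ⟨h𝒜.2, fun A hA _ => ⟨(hdisj A hA).symm, hdisj A hA⟩⟩⟩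
  rintro A (rfl | hA)
  exacts [⟨hV, hVne⟩, h𝒜.1 A hA]

theorem IsChain.cellular_sUnion {c : Set (Set (Set X))} (hchain : IsChain (· ⊆ ·) c)
    (hc : ∀ 𝒜 ∈ c, Cellular 𝒜) : Cellular (⋃₀ c) :=
  ⟨fun _ ⟨𝒜, h𝒜, hA⟩ => (hc 𝒜 h𝒜).1 _ hA,
    (pairwise_sUnion hchain.directedOn).2 fun 𝒜 h𝒜 => (hc 𝒜 h𝒜).2⟩

theorem Cellular.maximalCellular (h𝒜 : Cellular 𝒜)
    (hmeets : ∀ V : Set X, IsOpen V → V.Nonempty → ∃ A ∈ 𝒜, ¬Disjoint A V) :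
    MaximalCellular 𝒜 := by
  refine ⟨h𝒜, fun ℬ hℬ h𝒜ℬ => (subset_antisymm h𝒜ℬ fun B hB => ?_).symm⟩
  by_contra hB𝒜
  obtain ⟨A, hA, hAB⟩ := hmeets B (hℬ.1 B hB).1 (hℬ.1 B hB).2
  exact hAB (hℬ.2 (h𝒜ℬ hA) hB (ne_of_mem_of_not_mem hA hB𝒜))

theorem IsOpenCover.exists_maximalCellular_refinement {𝒰 : Set (Set X)} (h𝒰 : IsOpenCover 𝒰) :
    ∃ 𝒜, MaximalCellular 𝒜 ∧ ∀ A ∈ 𝒜, ∃ U ∈ 𝒰, A ⊆ U := by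
  set S := {𝒜 : Set (Set X) | Cellular 𝒜 ∧ ∀ A ∈ 𝒜, ∃ U ∈ 𝒰, A ⊆ U}
  obtain ⟨𝒜, ⟨h𝒜, h𝒜𝒰⟩, hmax⟩ := zorn_subset S fun c hcS hchain =>
    ⟨⋃₀ c, ⟨hchain.cellular_sUnion fun 𝒜 h𝒜 => (hcS h𝒜).1,
      fun _ ⟨𝒜, h𝒜, hA⟩ => (hcS h𝒜).2 _ hA⟩, fun _ => subset_sUnion_of_mem⟩
  refine ⟨𝒜, h𝒜.maximalCellular fun V hV ⟨x, hxV⟩ => ?_, h𝒜𝒰⟩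
  obtain ⟨U, hU, hxU⟩ := mem_sUnion.1 (h𝒰.2 ▸ mem_univ x)
  -- Otherwise the cell `V ∩ U` could be added to `𝒜`, contradicting maximality.
  by_contra! hdisj
  have hW : (V ∩ U).Nonempty := ⟨x, hxV, hxU⟩
  have hdisjW : ∀ A ∈ 𝒜, Disjoint A (V ∩ U) := fun A hA => (hdisj A hA).mono_right inter_subset_left
  have hWS : insert (V ∩ U) 𝒜 ∈ S :=
    ⟨h𝒜.insert (hV.inter (h𝒰.1 U hU)) hW hdisjW,
      forall_mem_insert.2 ⟨⟨U, hU, inter_subset_right⟩, h𝒜𝒰⟩⟩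
  have hW𝒜 : V ∩ U ∈ 𝒜 := hmax hWS (subset_insert _ _) (mem_insert _ _)
  exact hW.ne_empty (disjoint_self.1 (hdisjW _ hW𝒜))

end SelStar

theorem selectively_k_star_ccc_implies_k_star_Lindelof_general
    (X : Type*) [TopologicalSpace X] (k : ℕ)
    (h : SelectivelyKStarCCC X k) : KStarLindelof X k := by
  intro 𝒰 h𝒰
  obtain ⟨𝒜, h𝒜, h𝒜𝒰⟩ := h𝒰.exists_maximalCellular_refinement
  obtain ⟨A, hA, hst⟩ := h 𝒰 h𝒰 (fun _ => 𝒜) (fun _ => h𝒜)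
  choose U hU hAU using fun n => h𝒜𝒰 (A n) (hA n)
  refine ⟨range U, range_subset_iff.2 hU, countable_range U, eq_univ_of_univ_subset ?_⟩
  rw [← hst]
  exact stIter_mono 𝒰 k (iUnion_subset fun n => (hAU n).trans (subset_sUnion_of_mem ⟨n, rfl⟩))

/-- Every selectively `k`-star-ccc space is `k`-star-Lindelöf. -/
theorem selectively_k_star_ccc_implies_k_star_Lindelof
    (X : Type*) [TopologicalSpace X] (k : ℕ) (hk : 0 < k)
    (h : SelectivelyKStarCCC X k) : KStarLindelof X k :=
  selectively_k_star_ccc_implies_k_star_Lindelof_general X k h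
end

section
/- Let X be a regular topological space and let k be a positive integer. If X is selectively k-star-ccc, then X has the discrete countable chain condition (DCCC). -/
open Set

/-!
Let `𝒟` be an uncountable discrete family of nonempty open sets. By regularity every `D ∈ 𝒟`
carries a chain `D = V₀ ⊇ cl V₁ ⊇ V₁ ⊇ ⋯ ⊇ cl V_k ⊇ V_k ≠ ∅` with `V_{k+1} = ∅`. The layers
`Vᵢ \ cl V_{i+2}` together with the complement of `⋃_D cl V₁(D)` (closed, as `𝒟` is locally finite)
form an open cover in which a member meeting `V_{i+1}(D)` lies inside `Vᵢ(D)`. Hence the star of a set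
missing `Vᵢ(D)` misses `V_{i+1}(D)`. Extend `𝒟` to a maximal cellular family: a countable selection
from it misses some `D ∈ 𝒟`, so its `k`-th star misses `V_k(D)` and is not the whole space.
-/

open Set

namespace SelStar

variable {X : Type*}

theorem disjoint_stIter {𝒰 : Set (Set X)} {V : ℕ → Set X}
    (hV : ∀ u ∈ 𝒰, ∀ i, (u ∩ V (i + 1)).Nonempty → u ⊆ V i) {S : Set X}
    (hS : Disjoint S (V 0)) (n : ℕ) : Disjoint (stIter 𝒰 S n) (V n) := by
  induction n with
  | zero => exact hS
  | succ n ih =>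
    refine disjoint_left.2 ?_
    rintro x ⟨u, ⟨hu, y, hyu, hyS⟩, hxu⟩ hxV
    exact disjoint_left.1 ih hyS (hV u hu n ⟨x, hxu, hxV⟩ hyu)

variable [TopologicalSpace X]

theorem DiscreteFamily.pairwise_disjoint {𝒟 : Set (Set X)} (h : DiscreteFamily X 𝒟) :
    𝒟.Pairwise Disjoint := by
  intro A hA B hB hAB
  refine disjoint_left.2 fun x hxA hxB => hAB ?_
  obtain ⟨N, hN, hsub⟩ := h x
  exact hsub ⟨hA, x, hxA, mem_of_mem_nhds hN⟩ ⟨hB, x, hxB, mem_of_mem_nhds hN⟩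

theorem DiscreteFamily.locallyFinite {𝒟 : Set (Set X)} (h : DiscreteFamily X 𝒟) :
    LocallyFinite ((↑) : 𝒟 → Set X) := by
  intro x
  obtain ⟨N, hN, hsub⟩ := h x
  exact ⟨N, hN, (hsub.preimage Subtype.val_injective).finite.subset fun A hA => ⟨A.2, hA⟩⟩

theorem Cellular.exists_maximalCellular_superset {𝒜 : Set (Set X)} (h : Cellular 𝒜) :
    ∃ ℬ, MaximalCellular ℬ ∧ 𝒜 ⊆ ℬ := by
  have chain_ub : ∀ c ⊆ {𝒞 : Set (Set X) | Cellular 𝒞}, IsChain (· ⊆ ·) c → c.Nonempty →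
      ∃ ub ∈ {𝒞 : Set (Set X) | Cellular 𝒞}, ∀ 𝒞 ∈ c, 𝒞 ⊆ ub := fun c hc hchain _ =>
    ⟨⋃₀ c, ⟨fun _ ⟨_, h𝒞, hA⟩ => (hc h𝒞).1 _ hA,
      (pairwise_sUnion hchain.directedOn).2 fun _ h𝒞 => (hc h𝒞).2⟩,
      fun _ => subset_sUnion_of_mem⟩
  obtain ⟨ℬ, h𝒜ℬ, hℬ⟩ := zorn_subset_nonempty _ chain_ub 𝒜 h
  exact ⟨ℬ, ⟨hℬ.prop, fun _ h𝒞 hℬ𝒞 => hℬ.eq_of_ge h𝒞 hℬ𝒞⟩, h𝒜ℬ⟩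

theorem exists_open_nonempty_closure_subset [RegularSpace X] {s : Set X} (hs : IsOpen s)
    (hne : s.Nonempty) : ∃ t, IsOpen t ∧ t.Nonempty ∧ closure t ⊆ s := by
  obtain ⟨x, hx⟩ := hne
  obtain ⟨t, ht, htc, hts⟩ := exists_mem_nhds_isClosed_subset (hs.mem_nhds hx)
  exact ⟨interior t, isOpen_interior, ⟨x, mem_interior_iff_mem_nhds.2 ht⟩,
    (closure_minimal interior_subset htc).trans hts⟩

theorem exists_shrinking_chain [RegularSpace X] {A : Set X} (hA : IsOpen A) (hne : A.Nonempty)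
    (k : ℕ) : ∃ V : ℕ → Set X, V 0 = A ∧ (∀ i, IsOpen (V i)) ∧
      (∀ i, closure (V (i + 1)) ⊆ V i) ∧ (V k).Nonempty ∧ V (k + 1) = ∅ := by
  choose! g hg using fun s : Set X => exists_open_nonempty_closure_subset (s := s)
  have hiter : ∀ i, IsOpen (g^[i] A) ∧ (g^[i] A).Nonempty := by
    intro i
    induction i with
    | zero => exact ⟨hA, hne⟩
    | succ i ih =>
      rw [Function.iterate_succ_apply']
      exact ⟨(hg _ ih.1 ih.2).1, (hg _ ih.1 ih.2).2.1⟩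
  refine ⟨fun i => if i ≤ k then g^[i] A else ∅, by simp, fun i => ?_, fun i => ?_,
    by simpa using (hiter k).2, by simp⟩
  · dsimp only
    split_ifs
    exacts [(hiter i).1, isOpen_empty]
  · dsimp only
    split_ifs with hi₁ hi
    · rw [Function.iterate_succ_apply']
      exact (hg _ (hiter i).1 (hiter i).2).2.2
    · omega
    all_goals simp

section Layers

variable {V : ℕ → Set X}

theorem antitone_of_closure_succ_subset (hV : ∀ i, closure (V (i + 1)) ⊆ V i) : Antitone V :=
  antitone_nat_of_succ_le fun i => subset_closure.trans (hV i)

theorem exists_mem_diff_closure (hV : ∀ i, closure (V (i + 1)) ⊆ V i) {x : X} (h0 : x ∈ V 0)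
    {m : ℕ} (hm : x ∉ V m) : ∃ i, x ∈ V i \ closure (V (i + 2)) := by
  induction m with
  | zero => exact absurd h0 hm
  | succ m ih =>
    by_cases hxm : x ∈ V m
    · exact ⟨m, hxm, fun hc => hm (hV (m + 1) hc)⟩
    · exact ih hxm

theorem diff_closure_subset_of_inter_nonempty (hV : Antitone V) {i j : ℕ}
    (h : ((V j \ closure (V (j + 2))) ∩ V (i + 1)).Nonempty) :
    V j \ closure (V (j + 2)) ⊆ V i := by
  obtain ⟨x, ⟨-, hx⟩, hxi⟩ := h
  refine sdiff_subset.trans (hV ?_)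
  by_contra! hji
  exact hx (subset_closure (hV (by omega : j + 2 ≤ i + 1) hxi))

end Layers

def layerCover (𝒟 : Set (Set X)) (V : Set X → ℕ → Set X) : Set (Set X) :=
  insert (⋃ A ∈ 𝒟, closure (V A 1))ᶜ {u | ∃ A ∈ 𝒟, ∃ i, u = V A i \ closure (V A (i + 2))}

section LayerCover

variable {𝒟 : Set (Set X)} {V : Set X → ℕ → Set X}

theorem isOpenCover_layerCover (h𝒟 : DiscreteFamily X 𝒟) (hV0 : ∀ A ∈ 𝒟, V A 0 = A)
    (hVopen : ∀ A ∈ 𝒟, ∀ i, IsOpen (V A i))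
    (hVcl : ∀ A ∈ 𝒟, ∀ i, closure (V A (i + 1)) ⊆ V A i)
    (hVempty : ∀ A ∈ 𝒟, ∃ m, V A m = ∅) : IsOpenCover (layerCover 𝒟 V) := by
  have hcl₁ : ∀ A ∈ 𝒟, closure (V A 1) ⊆ A := fun A hA => (hVcl A hA 0).trans (hV0 A hA).le
  have hclosed : IsClosed (⋃ A ∈ 𝒟, closure (V A 1)) := by
    rw [biUnion_eq_iUnion]
    exact (h𝒟.locallyFinite.subset fun A => hcl₁ A A.2).isClosed_iUnion fun _ => isClosed_closure
  refine ⟨?_, eq_univ_of_forall fun x => ?_⟩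
  · rintro u (rfl | ⟨A, hA, i, rfl⟩)
    exacts [hclosed.isOpen_compl, (hVopen A hA i).sdiff isClosed_closure]
  by_cases hx : x ∈ (⋃ A ∈ 𝒟, closure (V A 1))ᶜ
  · exact ⟨_, mem_insert _ _, hx⟩
  obtain ⟨A, hA, hxA⟩ := mem_iUnion₂.1 (not_not.1 hx)
  obtain ⟨m, hm⟩ := hVempty A hA
  obtain ⟨i, hi⟩ := exists_mem_diff_closure (hVcl A hA) (hVcl A hA 0 hxA) (m := m)
    (by simp [hm])
  exact ⟨_, Or.inr ⟨A, hA, i, rfl⟩, hi⟩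

theorem subset_of_mem_layerCover_of_inter_nonempty (h𝒟 : 𝒟.Pairwise Disjoint)
    (hV0 : ∀ A ∈ 𝒟, V A 0 = A) (hVcl : ∀ A ∈ 𝒟, ∀ i, closure (V A (i + 1)) ⊆ V A i)
    {D : Set X} (hD : D ∈ 𝒟) :
    ∀ u ∈ layerCover 𝒟 V, ∀ i, (u ∩ V D (i + 1)).Nonempty → u ⊆ V D i := by
  have hsub : ∀ A ∈ 𝒟, ∀ i, V A i ⊆ A := fun A hA i =>
    (antitone_of_closure_succ_subset (hVcl A hA) (Nat.zero_le i)).trans (hV0 A hA).le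
  rintro u (rfl | ⟨B, hB, j, rfl⟩) i ⟨x, hxu, hxD⟩
  · have hx₁ : x ∈ V D 1 := antitone_of_closure_succ_subset (hVcl D hD) (by omega) hxD
    exact absurd (mem_iUnion₂.2 ⟨D, hD, subset_closure hx₁⟩) hxu
  by_cases hBD : B = D
  · subst hBD
    exact diff_closure_subset_of_inter_nonempty (antitone_of_closure_succ_subset (hVcl B hB))
      ⟨x, hxu, hxD⟩
  · exact absurd (hsub D hD _ hxD) (disjoint_left.1 (h𝒟 hB hD hBD) (hsub B hB j hxu.1))

end LayerCover

end SelStar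

open SelStar

theorem selectively_k_star_ccc_implies_dccc_of_regular_general
    (X : Type*) [TopologicalSpace X] [RegularSpace X] (k : ℕ)
    (h : SelectivelyKStarCCC X k) : DCCC X := by
  intro 𝒟 h𝒟 hdisc
  by_contra hunc
  choose! V hV0 hVopen hVcl hVk hVk₁ using
    fun A hA => exists_shrinking_chain (h𝒟 A hA).1 (h𝒟 A hA).2 k
  have hcover := isOpenCover_layerCover hdisc hV0 hVopen hVcl fun A hA => ⟨k + 1, hVk₁ A hA⟩
  obtain ⟨ℬ, hℬ, h𝒟ℬ⟩ :=
    Cellular.exists_maximalCellular_superset ⟨h𝒟, hdisc.pairwise_disjoint⟩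
  obtain ⟨f, hf, hst⟩ := h _ hcover (fun _ => ℬ) fun _ => hℬ
  obtain ⟨D, hD, hfD⟩ : ∃ D ∈ 𝒟, D ∉ range f :=
    not_subset.1 fun hsub => hunc ((countable_range f).mono hsub)
  have hmiss : Disjoint (⋃ n, f n) (V D 0) := by
    rw [hV0 D hD]
    exact disjoint_iUnion_left.2 fun n => hℬ.1.2 (hf n) (h𝒟ℬ hD) fun hn => hfD ⟨n, hn⟩
  have hstk := disjoint_stIter
    (subset_of_mem_layerCover_of_inter_nonempty hdisc.pairwise_disjoint hV0 hVcl hD) hmiss k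
  rw [hst, univ_disjoint] at hstk
  exact (hVk D hD).ne_empty hstk

/-- In regular spaces, every selectively `k`-star-ccc space has the DCCC. -/
theorem selectively_k_star_ccc_implies_dccc_of_regular
    (X : Type*) [TopologicalSpace X] [RegularSpace X] (k : ℕ) (hk : 0 < k)
    (h : SelectivelyKStarCCC X k) : DCCC X :=
  selectively_k_star_ccc_implies_dccc_of_regular_general X k h
end

section
/- The ordinal space [0,ω₁) of all countable ordinals with the order topology is selectively star-ccc. -/
open Set

open SelStar

/-- The space `[0, ω₁)` of countable ordinals. -/
def OmegaOne : Type _ := {o : Ordinal // o < (Cardinal.aleph 1).ord}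

noncomputable instance : LinearOrder OmegaOne := by
  delta OmegaOne; infer_instance

/-- `[0, ω₁)` carries the order topology induced by the ordinal ordering. -/
noncomputable instance : TopologicalSpace OmegaOne := Preorder.topology OmegaOne

instance : OrderTopology OmegaOne := ⟨rfl⟩

namespace OmegaOneAux

lemma lt_def {x y : OmegaOne} : x < y ↔ x.1 < y.1 := Iff.rfl

lemma le_def {x y : OmegaOne} : x ≤ y ↔ x.1 ≤ y.1 := Iff.rfl

lemma ord_limit : Order.IsSuccLimit ((Cardinal.aleph 1).ord) :=
  Cardinal.isSuccLimit_ord (Cardinal.aleph0_le_aleph 1)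

instance : Nonempty OmegaOne := ⟨⟨0, ord_limit.pos⟩⟩

lemma exists_gt (x : OmegaOne) : ∃ y : OmegaOne, x < y :=
  ⟨⟨Order.succ x.1, ord_limit.succ_lt x.2⟩, lt_def.mpr (Order.lt_succ x.1)⟩

/-- Countable subsets of `[0,ω₁)` have a "least upper bound"-like element. -/
lemma exists_lub (f : ℕ → OmegaOne) :
    ∃ b : OmegaOne, (∀ n, f n ≤ b) ∧ ∀ a : OmegaOne, a < b → ∃ n, a < f n := by
  have h : (⨆ n, (f n).1) < (Cardinal.aleph 1).ord := by
    refine Ordinal.iSup_lt_ord_lift (f := fun n => (f n).1) ?_ fun n => (f n).2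
    rw [Cardinal.isRegular_aleph_one.cof_eq]
    simpa using Cardinal.aleph0_lt_aleph_one

  refine ⟨⟨_, h⟩, fun n => le_def.mpr (Ordinal.le_iSup (fun n => (f n).1) n), fun a ha => ?_⟩
  exact Ordinal.lt_iSup_iff.mp (show a.1 < ⨆ n, (f n).1 from lt_def.mp ha)

/-- A Fodor-free pressing-down principle for `[0,ω₁)`: if `g α < α`
for every non-minimal `α`, then `g` is bounded on an unbounded set. -/
lemma pressing (g : OmegaOne → OmegaOne)
    (hg : ∀ α : OmegaOne, (∃ y, y < α) → g α < α) :
    ∃ β : OmegaOne, ∀ b : OmegaOne, ∃ α, b < α ∧ g α ≤ β := by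
  by_contra hcon
  push_neg at hcon
  choose h hh using hcon
  have step : ∀ x : OmegaOne, ∃ y, x < y ∧ h x < y := by
    intro x
    obtain ⟨y, hy⟩ := exists_gt (max x (h x))
    exact ⟨y, (le_max_left _ _).trans_lt hy, (le_max_right _ _).trans_lt hy⟩
  choose nxt hnxt1 hnxt2 using step
  obtain ⟨x0⟩ := (inferInstance : Nonempty OmegaOne)
  let f : ℕ → OmegaOne := fun n => Nat.rec (nxt x0) (fun _ y => nxt y) n
  have hstep : ∀ n, f (n + 1) = nxt (f n) := fun n => rfl
  obtain ⟨b, hb, hlub⟩ := exists_lub f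
  have hfb : ∀ n, f n < b := fun n =>
    lt_of_lt_of_le (by rw [hstep n]; exact hnxt1 (f n)) (hb (n + 1))
  have hgb : g b < b := hg b ⟨f 0, hfb 0⟩
  obtain ⟨n, hn⟩ := hlub _ hgb
  have hhb : h (f n) < b := lt_of_lt_of_le (by rw [hstep n]; exact hnxt2 (f n)) (hb (n + 1))
  exact absurd (hh (f n) b hhb) hn.not_gt

lemma Iic_countable (x : OmegaOne) : (Set.Iic x).Countable := by
  rw [Cardinal.countable_iff_lt_aleph_one]
  have hinj : Function.Injective
      (fun y : Set.Iic x => (⟨y.1.1, Set.mem_Iio.mpr (Order.lt_succ_iff.mpr (le_def.mp y.2))⟩ :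
        Set.Iio (Order.succ x.1))) := by
    intro a b hab
    have h' : a.1.1 = b.1.1 := by
      have h'' := congrArg Subtype.val hab
      simpa using h''
    exact Subtype.ext (Subtype.ext h')
  have h1 := Cardinal.mk_le_of_injective hinj
  rw [Ordinal.mk_Iio_ordinal] at h1
  refine h1.trans_lt ?_
  have h2 : (Order.succ x.1).card < Cardinal.aleph 1 :=
    Cardinal.lt_ord.mp (ord_limit.succ_lt x.2)
  have h3 := Cardinal.lift_lt.mpr h2
  rwa [Cardinal.lift_aleph, Ordinal.lift_one] at h3

/-- A maximal cellular family meets every nonempty open set. -/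
lemma maximal_meets {X : Type*} [TopologicalSpace X] {𝒜 : Set (Set X)}
    (h : MaximalCellular 𝒜) {V : Set X} (hV : IsOpen V) (hVne : V.Nonempty) :
    ∃ A ∈ 𝒜, (A ∩ V).Nonempty := by
  by_contra hc
  push_neg at hc
  have hd : ∀ A ∈ 𝒜, Disjoint A V := fun A hA =>
    Set.disjoint_iff_inter_eq_empty.mpr (hc A hA)
  have hVnot : V ∉ 𝒜 := fun hVA =>
    hVne.ne_empty (disjoint_self.mp (hd V hVA))
  have hcell : Cellular (insert V 𝒜) := by
    constructor
    · rintro A (rfl | hA)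
      · exact ⟨hV, hVne⟩
      · exact h.1.1 A hA
    · rw [Set.pairwise_insert_of_symm]
      exact ⟨h.1.2, fun B hB _ => (hd B hB).symm⟩
  have := h.2 (insert V 𝒜) hcell (Set.subset_insert _ _)
  exact hVnot (this ▸ Set.mem_insert V 𝒜)

end OmegaOneAux

open OmegaOneAux in
/-- `[0, ω₁)` is selectively star-ccc. -/
theorem omegaOne_selectively_star_ccc :
    SelectivelyKStarCCC OmegaOne 1 := by
  intro 𝒰 h𝒰 𝒜 h𝒜
  obtain ⟨hop, hcov⟩ := h𝒰
  have hmem : ∀ x : OmegaOne, ∃ U, U ∈ 𝒰 ∧ x ∈ U := by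
    intro x
    have hx : x ∈ ⋃₀ 𝒰 := hcov ▸ Set.mem_univ x
    simpa [Set.mem_sUnion] using hx
  choose Ux hUx hxUx using hmem
  have hIoc : ∀ α : OmegaOne, ∃ l : OmegaOne,
      (∃ y, y < α) → l < α ∧ Set.Ioc l α ⊆ Ux α := by
    intro α
    by_cases hα : ∃ y, y < α
    · obtain ⟨l, hl, hsub⟩ :=
        exists_Ioc_subset_of_mem_nhds ((hop _ (hUx α)).mem_nhds (hxUx α)) hα
      exact ⟨l, fun _ => ⟨hl, hsub⟩⟩
    · exact ⟨α, fun hcon => absurd hcon hα⟩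
  choose g hgspec using hIoc
  obtain ⟨β, hβ⟩ := pressing g fun α hα => (hgspec α hα).1
  -- the tail: a member of 𝒜 0 meeting (β, ω₁)
  obtain ⟨γ', hγ'⟩ := exists_gt β
  obtain ⟨A0, hA0mem, hA0meet⟩ := maximal_meets (h𝒜 0) isOpen_Ioi ⟨γ', hγ'⟩
  obtain ⟨γ, hγA0, hγβ⟩ := hA0meet
  -- the countable initial segment [0, β]
  obtain ⟨e, he⟩ := (Iic_countable β).exists_eq_range ⟨β, le_refl β⟩
  have hW : ∀ m : ℕ, ∃ A ∈ 𝒜 (m + 1), (A ∩ Ux (e m)).Nonempty := fun m =>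
    maximal_meets (h𝒜 (m + 1)) (hop _ (hUx (e m))) ⟨e m, hxUx (e m)⟩
  choose Asel hAselmem hAselmeet using hW
  refine ⟨fun n => Nat.casesOn n A0 Asel, fun n => Nat.casesOn n hA0mem hAselmem, ?_⟩
  set T : Set OmegaOne := ⋃ n, Nat.casesOn n A0 Asel with hT
  have hmain : st 𝒰 T = Set.univ := by
    rw [Set.eq_univ_iff_forall]
    intro x
    rw [st, Set.mem_sUnion]
    by_cases hx : x ≤ β
    · have hxr : x ∈ Set.range e := he ▸ hx
      obtain ⟨m, hm⟩ := hxr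
      obtain ⟨z, hz1, hz2⟩ := hAselmeet m
      refine ⟨Ux (e m), ⟨hUx (e m), ⟨z, hz2, ?_⟩⟩, hm ▸ hxUx (e m)⟩
      exact Set.mem_iUnion.mpr ⟨m + 1, hz1⟩
    · push_neg at hx
      obtain ⟨α, hbα, hgβ⟩ := hβ (max x γ)
      have hxα : x < α := (le_max_left _ _).trans_lt hbα
      have hγα : γ < α := (le_max_right _ _).trans_lt hbα
      obtain ⟨-, hsub⟩ := hgspec α ⟨x, hxα⟩
      have hIocsub : Set.Ioc β α ⊆ Ux α := fun z hz =>
        hsub ⟨lt_of_le_of_lt hgβ hz.1, hz.2⟩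
      refine ⟨Ux α, ⟨hUx α, ⟨γ, hIocsub ⟨hγβ, hγα.le⟩, ?_⟩⟩,
        hIocsub ⟨hx, hxα.le⟩⟩
      exact Set.mem_iUnion.mpr ⟨0, hγA0⟩
  simpa [stIter] using hmain
end

section
/- There exists a Hausdorff topological space that is strongly 1-star-Lindelöf (SSL) but not selectively star-ccc. -/
open Set

open SelStar

namespace SelStarProof
open Cardinal Ordinal Set

noncomputable section

abbrev ω₁o : Ordinal.{0} := (Cardinal.aleph 1).ord

def W : Type := ω₁o.ToType

instance : LinearOrder W := inferInstanceAs (LinearOrder ω₁o.ToType)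

def eW : Set.Iio ω₁o ≃o W := Ordinal.ToType.mk

lemma W_nonempty : Nonempty W := by
  rw [show W = ω₁o.ToType from rfl, Ordinal.nonempty_toType_iff]
  intro h
  have h2 : (0:Ordinal.{0}) < ω₁o := Cardinal.lt_ord.2 (by simpa using aleph0_lt_aleph_one.trans_le' (by simp))
  simp [h] at h2

lemma W_bound (f : ℕ → W) : ∃ b : W, ∀ n, f n < b := by
  set o : ℕ → Ordinal.{0} := fun n => (eW.symm (f n)).1 with ho
  have h1 : ∀ n, o n < ω₁o := fun n => (eW.symm (f n)).2
  have h2 : iSup o < ω₁o := by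
    have := Ordinal.iSup_lt_omega_one (f := o) (by simpa [ω₁o, Cardinal.ord_aleph] using h1)
    simpa [ω₁o, Cardinal.ord_aleph] using this
  have h3 : Order.succ (iSup o) < ω₁o :=
    (Cardinal.isSuccLimit_ord aleph0_lt_aleph_one.le).succ_lt h2
  refine ⟨eW ⟨Order.succ (iSup o), h3⟩, fun n => ?_⟩
  have h4 : eW.symm (f n) < ⟨Order.succ (iSup o), h3⟩ := by
    change (eW.symm (f n)).1 < Order.succ (iSup o)
    exact (le_ciSup (Ordinal.bddAbove_range o) n).trans_lt (Order.lt_succ _)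
  have h5 := eW.lt_iff_lt.2 h4
  simpa using h5

lemma W_Iio_countable (γ : W) : (Set.Iio γ).Countable := by
  rw [Cardinal.countable_iff_lt_aleph_one]
  set oγ : Ordinal.{0} := (eW.symm γ).1 with hoγ
  have hγ : oγ < ω₁o := (eW.symm γ).2
  have hlt : ∀ x : Set.Iio γ, (eW.symm x.1).1 < oγ := by
    intro x
    exact eW.symm.lt_iff_lt.2 x.2
  have : #(Set.Iio γ) ≤ #(oγ.ToType) := by
    refine Cardinal.mk_le_of_injective (f := fun x =>
      Ordinal.ToType.mk (o := oγ) ⟨(eW.symm x.1).1, hlt x⟩) ?_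
    intro a b hab
    have := (Ordinal.ToType.mk (o := oγ)).injective hab
    have h2 : eW.symm a.1 = eW.symm b.1 := Subtype.ext (Subtype.mk_eq_mk.1 this)
    exact Subtype.ext (eW.symm.injective h2)
  refine this.trans_lt ?_
  rw [Cardinal.mk_toType]
  exact Cardinal.lt_ord.1 hγ

lemma W_card_le : #W ≤ #(ℕ → Bool) := by
  have h1 : #W = Cardinal.aleph 1 := by
    rw [show W = ω₁o.ToType from rfl, Cardinal.mk_toType, Cardinal.card_ord]
  rw [h1, Cardinal.mk_arrow]
  simp only [Cardinal.mk_bool, Cardinal.mk_nat, Cardinal.lift_id]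
  have := Cardinal.aleph_one_le_continuum
  rwa [Cardinal.continuum] at this

def ιW : W → (ℕ → Bool) := Classical.choice (Cardinal.le_def _ _ |>.1 W_card_le) |>.toFun

lemma ιW_inj : Function.Injective ιW := (Classical.choice (Cardinal.le_def _ _ |>.1 W_card_le)).injective

/-! almost disjoint family -/

def pre (g : ℕ → Bool) (m : ℕ) : List Bool := List.ofFn (fun i : Fin m => g i)

def Eset (g : ℕ → Bool) : Set ℕ := Set.range (fun m => Encodable.encode (pre g m))

lemma pre_inj (g : ℕ → Bool) : Function.Injective (fun m => Encodable.encode (pre g m)) := by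
  intro a b hab
  have := Encodable.encode_injective hab
  have : (pre g a).length = (pre g b).length := by rw [this]
  simpa [pre] using this

lemma Eset_infinite (g : ℕ → Bool) : (Eset g).Infinite :=
  Set.infinite_range_of_injective (pre_inj g)

lemma Eset_ad {g h : ℕ → Bool} (hgh : g ≠ h) : (Eset g ∩ Eset h).Finite := by
  have hex : ∃ i, g i ≠ h i := by
    by_contra hc
    push_neg at hc
    exact hgh (funext hc)
  classical
  set i₀ := Nat.find hex with hi₀
  have hspec : g i₀ ≠ h i₀ := Nat.find_spec hex
  have hsub : Eset g ∩ Eset h ⊆ (fun m => Encodable.encode (pre g m)) '' (Set.Iic i₀) := by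
    rintro n ⟨⟨m, rfl⟩, ⟨m', hm'⟩⟩
    have hpre : pre h m' = pre g m := Encodable.encode_injective hm'
    have hlen : m' = m := by
      have := congrArg List.length hpre
      simpa [pre] using this
    subst hlen
    have hval : (fun i : Fin m' => h i.1) = (fun i : Fin m' => g i.1) := by
      have := hpre
      simpa [pre, List.ofFn_inj] using this
    refine ⟨m', ?_, rfl⟩
    simp only [Set.mem_Iic]
    by_contra hgt
    push_neg at hgt
    exact hspec (congrFun hval ⟨i₀, hgt⟩).symm
  exact (Set.Finite.image _ (Set.finite_Iic i₀)).subset hsub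

def E (α : W) : Set ℕ := Eset (ιW α)

lemma E_infinite (α : W) : (E α).Infinite := Eset_infinite _

lemma E_ad {α β : W} (h : α ≠ β) : (E α ∩ E β).Finite :=
  Eset_ad (fun hc => h (ιW_inj hc))

/-! The space -/

def Xs : Type := Sum (ℕ × W) (Sum ℕ W)

def gnd (g : ℕ × W) : Xs := Sum.inl g
def hub (k : ℕ) : Xs := Sum.inr (Sum.inl k)
def wit (α : W) : Xs := Sum.inr (Sum.inr α)

@[simp] lemma gnd_inj_iff {g g'} : gnd g = gnd g' ↔ g = g' :=
  ⟨fun h => by injection h, fun h => by rw [h]⟩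
@[simp] lemma hub_inj_iff {k k'} : hub k = hub k' ↔ k = k' :=
  ⟨fun h => by injection h with h'; injection h', fun h => by rw [h]⟩
@[simp] lemma wit_inj_iff {α β} : wit α = wit β ↔ α = β :=
  ⟨fun h => by injection h with h'; injection h', fun h => by rw [h]⟩
@[simp] lemma gnd_ne_hub {g k} : gnd g ≠ hub k := fun h => by injection h
@[simp] lemma gnd_ne_wit {g α} : gnd g ≠ wit α := fun h => by injection h
@[simp] lemma hub_ne_gnd {g k} : hub k ≠ gnd g := fun h => by injection h
@[simp] lemma hub_ne_wit {k α} : hub k ≠ wit α := fun h => by injection h with h'; injection h'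
@[simp] lemma wit_ne_gnd {g α} : wit α ≠ gnd g := fun h => by injection h
@[simp] lemma wit_ne_hub {k α} : wit α ≠ hub k := fun h => by injection h with h'; injection h'

lemma Xs_cases (x : Xs) : (∃ g, x = gnd g) ∨ (∃ k, x = hub k) ∨ (∃ α, x = wit α) := by
  rcases x with g | (k | α)
  · exact Or.inl ⟨g, rfl⟩
  · exact Or.inr (Or.inl ⟨k, rfl⟩)
  · exact Or.inr (Or.inr ⟨α, rfl⟩)

def XOpen (U : Set Xs) : Prop :=
  (∀ k, hub k ∈ U → ∃ γ : W, ∀ δ : W, γ ≤ δ → gnd (k, δ) ∈ U) ∧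
  (∀ α, wit α ∈ U → ∃ F : Set ℕ, F.Finite ∧ ∀ k ∈ E α \ F, hub k ∈ U)

instance topX : TopologicalSpace Xs where
  IsOpen := XOpen
  isOpen_univ := ⟨fun _ _ => ⟨Classical.choice W_nonempty, fun _ _ => trivial⟩,
    fun _ _ => ⟨∅, finite_empty, fun _ _ => trivial⟩⟩
  isOpen_inter := by
    rintro U V ⟨hU1, hU2⟩ ⟨hV1, hV2⟩
    constructor
    · intro k hk
      obtain ⟨γ₁, h₁⟩ := hU1 k hk.1
      obtain ⟨γ₂, h₂⟩ := hV1 k hk.2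
      exact ⟨max γ₁ γ₂, fun δ hδ => ⟨h₁ δ (le_trans (le_max_left _ _) hδ),
        h₂ δ (le_trans (le_max_right _ _) hδ)⟩⟩
    · intro α hα
      obtain ⟨F₁, hF₁, h₁⟩ := hU2 α hα.1
      obtain ⟨F₂, hF₂, h₂⟩ := hV2 α hα.2
      refine ⟨F₁ ∪ F₂, hF₁.union hF₂, fun k hk => ?_⟩
      rcases hk with ⟨hkE, hkF⟩
      exact ⟨h₁ k ⟨hkE, fun h => hkF (Or.inl h)⟩, h₂ k ⟨hkE, fun h => hkF (Or.inr h)⟩⟩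
  isOpen_sUnion := by
    intro S hS
    constructor
    · intro k hk
      obtain ⟨u, hu, hku⟩ := hk
      obtain ⟨γ, hγ⟩ := (hS u hu).1 k hku
      exact ⟨γ, fun δ hδ => ⟨u, hu, hγ δ hδ⟩⟩
    · intro α hα
      obtain ⟨u, hu, hαu⟩ := hα
      obtain ⟨F, hF, h⟩ := (hS u hu).2 α hαu
      exact ⟨F, hF, fun k hk => ⟨u, hu, h k hk⟩⟩

lemma isOpenX_iff {U : Set Xs} : IsOpen U ↔ XOpen U := Iff.rfl

/-! basic open sets -/

def Hset (k : ℕ) (γ : W) : Set Xs := {hub k} ∪ (fun δ => gnd (k, δ)) '' Set.Ici γ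

def Hfull (k : ℕ) : Set Xs := {hub k} ∪ Set.range (fun δ => gnd (k, δ))

def Nset (α : W) (γ : W) (F : Set ℕ) : Set Xs := {wit α} ∪ ⋃ k ∈ E α \ F, Hset k γ

lemma mem_Hset {x k γ} : x ∈ Hset k γ ↔ x = hub k ∨ ∃ δ, γ ≤ δ ∧ x = gnd (k, δ) := by
  simp [Hset, eq_comm, and_comm]

lemma mem_Hfull {x k} : x ∈ Hfull k ↔ x = hub k ∨ ∃ δ, x = gnd (k, δ) := by
  simp [Hfull, eq_comm]

lemma mem_Nset {x α γ F} : x ∈ Nset α γ F ↔ x = wit α ∨ ∃ k ∈ E α \ F, x ∈ Hset k γ := by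
  simp [Nset, eq_comm]

lemma isOpen_Hset (k : ℕ) (γ : W) : IsOpen (Hset k γ) := by
  rw [isOpenX_iff]
  constructor
  · intro j hj
    rcases mem_Hset.1 hj with h | ⟨δ, _, h⟩
    · rcases hub_inj_iff.1 h with rfl
      exact ⟨γ, fun δ hδ => mem_Hset.2 (Or.inr ⟨δ, hδ, rfl⟩)⟩
    · exact absurd h hub_ne_gnd
  · intro α hα
    rcases mem_Hset.1 hα with h | ⟨δ, _, h⟩
    · exact absurd h wit_ne_hub
    · exact absurd h wit_ne_gnd

lemma isOpen_Hfull (k : ℕ) : IsOpen (Hfull k) := by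
  rw [isOpenX_iff]
  constructor
  · intro j hj
    rcases mem_Hfull.1 hj with h | ⟨δ, h⟩
    · rcases hub_inj_iff.1 h with rfl
      exact ⟨Classical.choice W_nonempty, fun δ _ => mem_Hfull.2 (Or.inr ⟨δ, rfl⟩)⟩
    · exact absurd h hub_ne_gnd
  · intro α hα
    rcases mem_Hfull.1 hα with h | ⟨δ, h⟩
    · exact absurd h wit_ne_hub
    · exact absurd h wit_ne_gnd

lemma isOpen_Nset (α : W) (γ : W) {F : Set ℕ} (hF : F.Finite) : IsOpen (Nset α γ F) := by
  rw [isOpenX_iff]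
  constructor
  · intro j hj
    rcases mem_Nset.1 hj with h | ⟨k, hk, hmem⟩
    · exact absurd h.symm wit_ne_hub
    · rcases mem_Hset.1 hmem with h | ⟨δ, _, h⟩
      · rcases hub_inj_iff.1 h with rfl
        exact ⟨γ, fun δ hδ => mem_Nset.2 (Or.inr ⟨j, hk, mem_Hset.2 (Or.inr ⟨δ, hδ, rfl⟩)⟩)⟩
      · exact absurd h hub_ne_gnd
  · intro β hβ
    rcases mem_Nset.1 hβ with h | ⟨k, hk, hmem⟩
    · rcases wit_inj_iff.1 h with rfl
      exact ⟨F, hF, fun k hk => mem_Nset.2 (Or.inr ⟨k, hk, mem_Hset.2 (Or.inl rfl)⟩)⟩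
    · rcases mem_Hset.1 hmem with h | ⟨δ, _, h⟩
      · exact absurd h wit_ne_hub
      · exact absurd h wit_ne_gnd

lemma isOpen_gnd_singleton (g : ℕ × W) : IsOpen ({gnd g} : Set Xs) := by
  rw [isOpenX_iff]
  constructor
  · intro k hk
    exact absurd (Set.mem_singleton_iff.1 hk) hub_ne_gnd
  · intro α hα
    exact absurd (Set.mem_singleton_iff.1 hα) wit_ne_gnd

-- (appended to t3 content)

instance t2X : T2Space Xs := by
  have γ₀ : W := Classical.choice W_nonempty
  -- disjointness helpers
  have D1 : ∀ {k j : ℕ} {γ γ' : W}, k ≠ j → Disjoint (Hset k γ) (Hset j γ') := by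
    intro k j γ γ' hkj
    rw [Set.disjoint_left]
    intro z hz hz'
    rcases mem_Hset.1 hz with rfl | ⟨δ, _, rfl⟩ <;>
      rcases mem_Hset.1 hz' with h' | ⟨δ', _, h'⟩
    · exact hkj (hub_inj_iff.1 h')
    · exact hub_ne_gnd h'
    · exact gnd_ne_hub h'
    · have := gnd_inj_iff.1 h'
      exact hkj (congrArg Prod.fst this)
  have D2 : ∀ {k j : ℕ} {δ γ : W}, δ < γ → Disjoint ({gnd (k, δ)} : Set Xs) (Hset j γ) := by
    intro k j δ γ hδγ
    rw [Set.disjoint_left]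
    intro z hz hz'
    rcases Set.mem_singleton_iff.1 hz with rfl
    rcases mem_Hset.1 hz' with h' | ⟨δ', hδ', h'⟩
    · exact gnd_ne_hub h'
    · have h2 := gnd_inj_iff.1 h'
      have : δ = δ' := congrArg Prod.snd h2
      exact absurd hδ' (by rw [← this]; exact not_le.2 hδγ)
  have D3 : ∀ {k : ℕ} {α δ γ : W} {F : Set ℕ}, δ < γ →
      Disjoint ({gnd (k, δ)} : Set Xs) (Nset α γ F) := by
    intro k α δ γ F hδγ
    rw [Set.disjoint_left]
    intro z hz hz'
    rcases Set.mem_singleton_iff.1 hz with rfl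
    rcases mem_Nset.1 hz' with h' | ⟨j, _, hm⟩
    · exact gnd_ne_wit h'
    · exact Set.disjoint_left.1 (D2 hδγ) rfl hm
  have D4 : ∀ {j : ℕ} {α γ γ' : W}, Disjoint (Hset j γ') (Nset α γ {j}) := by
    intro j α γ γ'
    rw [Set.disjoint_left]
    intro z hz hz'
    rcases mem_Nset.1 hz' with h' | ⟨k, hk, hm⟩
    · rcases mem_Hset.1 hz with h | ⟨δ, _, h⟩
      · rw [h] at h'; exact hub_ne_wit h'
      · rw [h] at h'; exact gnd_ne_wit h'
    · have hkj : k ≠ j := fun h => hk.2 (by rw [h]; rfl)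
      exact Set.disjoint_left.1 (D1 (Ne.symm hkj)) hz hm
  have D5 : ∀ {α β γ γ' : W}, α ≠ β →
      Disjoint (Nset α γ (E α ∩ E β)) (Nset β γ' (E α ∩ E β)) := by
    intro α β γ γ' hab
    rw [Set.disjoint_left]
    intro z hz hz'
    rcases mem_Nset.1 hz with rfl | ⟨k, hk, hm⟩
    · rcases mem_Nset.1 hz' with h' | ⟨k, _, hm⟩
      · exact hab (wit_inj_iff.1 h')
      · rcases mem_Hset.1 hm with h | ⟨δ, _, h⟩
        · exact wit_ne_hub h
        · exact wit_ne_gnd h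
    · rcases mem_Nset.1 hz' with h' | ⟨k', hk', hm'⟩
      · rcases mem_Hset.1 hm with h | ⟨δ, _, h⟩
        · rw [h] at h'; exact hub_ne_wit h'
        · rw [h] at h'; exact gnd_ne_wit h'
      · have hkk' : k = k' := by
          rcases mem_Hset.1 hm with h | ⟨δ, _, h⟩ <;> rcases mem_Hset.1 hm' with h' | ⟨δ', _, h'⟩
          · rw [h] at h'; exact hub_inj_iff.1 h'
          · rw [h] at h'; exact absurd h' hub_ne_gnd
          · rw [h] at h'; exact absurd h' gnd_ne_hub
          · rw [h] at h'; exact congrArg Prod.fst (gnd_inj_iff.1 h')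
        exact hk.2 ⟨hk.1, by rw [hkk']; exact hk'.1⟩
  constructor
  intro x y hxy
  rcases Xs_cases x with ⟨g, rfl⟩ | ⟨k, rfl⟩ | ⟨α, rfl⟩ <;>
    rcases Xs_cases y with ⟨g', rfl⟩ | ⟨j, rfl⟩ | ⟨β, rfl⟩
  · exact ⟨{gnd g}, {gnd g'}, isOpen_gnd_singleton g, isOpen_gnd_singleton g', rfl, rfl,
      Set.disjoint_singleton.2 hxy⟩
  · obtain ⟨b, hb⟩ := W_bound (fun _ => g.2)
    exact ⟨{gnd g}, Hset j b, isOpen_gnd_singleton g, isOpen_Hset j b, rfl,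
      mem_Hset.2 (Or.inl rfl), D2 (hb 0)⟩
  · obtain ⟨b, hb⟩ := W_bound (fun _ => g.2)
    exact ⟨{gnd g}, Nset β b ∅, isOpen_gnd_singleton g, isOpen_Nset β b finite_empty, rfl,
      mem_Nset.2 (Or.inl rfl), D3 (hb 0)⟩
  · obtain ⟨b, hb⟩ := W_bound (fun _ => g'.2)
    exact ⟨Hset k b, {gnd g'}, isOpen_Hset k b, isOpen_gnd_singleton g',
      mem_Hset.2 (Or.inl rfl), rfl, (D2 (hb 0)).symm⟩
  · exact ⟨Hset k γ₀, Hset j γ₀, isOpen_Hset k γ₀, isOpen_Hset j γ₀,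
      mem_Hset.2 (Or.inl rfl), mem_Hset.2 (Or.inl rfl),
      D1 (fun h => hxy (by rw [h]))⟩
  · refine ⟨Hset k γ₀, Nset β γ₀ {k}, isOpen_Hset k γ₀,
      isOpen_Nset β γ₀ (Set.finite_singleton k), mem_Hset.2 (Or.inl rfl),
      mem_Nset.2 (Or.inl rfl), D4⟩
  · obtain ⟨b, hb⟩ := W_bound (fun _ => g'.2)
    exact ⟨Nset α b ∅, {gnd g'}, isOpen_Nset α b finite_empty, isOpen_gnd_singleton g',
      mem_Nset.2 (Or.inl rfl), rfl, (D3 (hb 0)).symm⟩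
  · refine ⟨Nset α γ₀ {j}, Hset j γ₀, isOpen_Nset α γ₀ (Set.finite_singleton j),
      isOpen_Hset j γ₀, mem_Nset.2 (Or.inl rfl), mem_Hset.2 (Or.inl rfl), D4.symm⟩
  · have hab : α ≠ β := fun h => hxy (by rw [h])
    exact ⟨Nset α γ₀ (E α ∩ E β), Nset β γ₀ (E α ∩ E β),
      isOpen_Nset α γ₀ (E_ad hab), isOpen_Nset β γ₀ (E_ad hab),
      mem_Nset.2 (Or.inl rfl), mem_Nset.2 (Or.inl rfl), D5 hab⟩


/-! SSL and failure -/

lemma sslX : ∀ 𝒰 : Set (Set Xs), ((∀ u ∈ 𝒰, IsOpen u) ∧ ⋃₀ 𝒰 = Set.univ) →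
    ∃ A : Set Xs, A.Countable ∧ ⋃₀ {u ∈ 𝒰 | (u ∩ A).Nonempty} = Set.univ := by
  intro 𝒰 h𝒰
  obtain ⟨hopen, hcov⟩ := h𝒰
  have hx : ∀ x : Xs, ∃ u ∈ 𝒰, x ∈ u := by
    intro x
    have : x ∈ ⋃₀ 𝒰 := by rw [hcov]; trivial
    simpa using this
  choose U hU hmemU using fun k => hx (hub k)
  choose γ hγ using fun k => ((isOpenX_iff).1 (hopen _ (hU k))).1 k (hmemU k)
  classical
  set C : Set Xs := Set.range hub ∪ ⋃ k, (fun δ => gnd (k, δ)) '' Set.Iio (γ k) with hC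
  refine ⟨C, ?_, ?_⟩
  · exact (Set.countable_range hub).union
      (Set.countable_iUnion (fun k => ((W_Iio_countable (γ k)).image _)))
  · apply Set.eq_univ_of_forall
    intro x
    have hhubC : ∀ k, hub k ∈ C := fun k => Or.inl ⟨k, rfl⟩
    rcases Xs_cases x with ⟨g, rfl⟩ | ⟨k, rfl⟩ | ⟨α, rfl⟩
    · by_cases hlt : g.2 < γ g.1
      · obtain ⟨u, hu, hxu⟩ := hx (gnd g)
        have hgC : gnd g ∈ C := Or.inr (Set.mem_iUnion.2 ⟨g.1, ⟨g.2, hlt, rfl⟩⟩)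
        exact ⟨u, ⟨hu, ⟨gnd g, hxu, hgC⟩⟩, hxu⟩
      · push_neg at hlt
        refine ⟨U g.1, ⟨hU g.1, ⟨hub g.1, hmemU g.1, hhubC g.1⟩⟩, ?_⟩
        exact hγ g.1 g.2 hlt
    · exact ⟨U k, ⟨hU k, ⟨hub k, hmemU k, hhubC k⟩⟩, hmemU k⟩
    · obtain ⟨u, hu, hxu⟩ := hx (wit α)
      obtain ⟨F, hF, hh⟩ := ((isOpenX_iff).1 (hopen u hu)).2 α hxu
      obtain ⟨k, hk⟩ := ((E_infinite α).diff hF).nonempty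
      exact ⟨u, ⟨hu, ⟨hub k, hh k hk, hhubC k⟩⟩, hxu⟩

def Afam : Set (Set Xs) := Set.range (fun g : ℕ × W => ({gnd g} : Set Xs))

def Ufail : Set (Set Xs) :=
  {u | (∃ g, u = ({gnd g} : Set Xs)) ∨ (∃ k, u = Hfull k) ∨ (∃ α, u = Nset α α ∅)}

lemma Ufail_cover : (∀ u ∈ Ufail, IsOpen u) ∧ ⋃₀ Ufail = Set.univ := by
  constructor
  · rintro u (⟨g, rfl⟩ | ⟨k, rfl⟩ | ⟨α, rfl⟩)
    · exact isOpen_gnd_singleton g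
    · exact isOpen_Hfull k
    · exact isOpen_Nset α α finite_empty
  · apply Set.eq_univ_of_forall
    intro x
    rcases Xs_cases x with ⟨g, rfl⟩ | ⟨k, rfl⟩ | ⟨α, rfl⟩
    · exact ⟨{gnd g}, Or.inl ⟨g, rfl⟩, rfl⟩
    · exact ⟨Hfull k, Or.inr (Or.inl ⟨k, rfl⟩), mem_Hfull.2 (Or.inl rfl)⟩
    · exact ⟨Nset α α ∅, Or.inr (Or.inr ⟨α, rfl⟩), mem_Nset.2 (Or.inl rfl)⟩

lemma Afam_cellular :
    (∀ A ∈ Afam, IsOpen A ∧ A.Nonempty) ∧ Afam.Pairwise Disjoint := by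
  constructor
  · rintro A ⟨g, rfl⟩
    exact ⟨isOpen_gnd_singleton g, ⟨gnd g, rfl⟩⟩
  · rintro A ⟨g, rfl⟩ B ⟨g', rfl⟩ hne
    refine Set.disjoint_singleton.2 (fun h => hne ?_)
    rw [gnd_inj_iff.1 h]

lemma Afam_maxcell : SelStar.MaximalCellular Afam := by
  refine ⟨Afam_cellular, ?_⟩
  intro ℬ hℬ hsub
  apply Set.Subset.antisymm _ hsub
  intro B hB
  by_contra hBA
  have hdisj : ∀ g : ℕ × W, gnd g ∉ B := by
    intro g hg
    have h1 : ({gnd g} : Set Xs) ∈ ℬ := hsub ⟨g, rfl⟩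
    have hne : B ≠ ({gnd g} : Set Xs) := fun h => hBA (h ▸ ⟨g, rfl⟩)
    exact (Set.disjoint_left.1 (hℬ.2 hB h1 hne) hg) rfl
  obtain ⟨hopen, hne⟩ := hℬ.1 B hB
  have hhub : ∀ k, hub k ∉ B := by
    intro k hk
    obtain ⟨γ, hγ⟩ := ((isOpenX_iff).1 hopen).1 k hk
    exact hdisj (k, γ) (hγ γ le_rfl)
  obtain ⟨x, hx⟩ := hne
  rcases Xs_cases x with ⟨g, rfl⟩ | ⟨k, rfl⟩ | ⟨α, rfl⟩
  · exact hdisj g hx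
  · exact hhub k hx
  · obtain ⟨F, hF, hh⟩ := ((isOpenX_iff).1 hopen).2 α hx
    obtain ⟨k, hk⟩ := ((E_infinite α).diff hF).nonempty
    exact hhub k (hh k hk)

lemma sslX' : SelStar.SSL Xs := by
  intro 𝒰 h𝒰
  exact sslX 𝒰 h𝒰

lemma notselX : ¬ SelStar.SelectivelyKStarCCC Xs 1 := by
  intro h
  obtain ⟨A, hA, hst⟩ := h Ufail Ufail_cover (fun _ => Afam) (fun _ => Afam_maxcell)
  choose p hp using fun n => Set.mem_range.1 (hA n)
  obtain ⟨b, hb⟩ := W_bound (fun n => (p n).2)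
  have hw : wit b ∈ SelStar.stIter Ufail (⋃ n, A n) 1 := by rw [hst]; trivial
  have hw' : wit b ∈ SelStar.st Ufail (⋃ n, A n) := by
    simpa [SelStar.stIter] using hw
  simp only [SelStar.st, Set.mem_sUnion, Set.mem_sep_iff] at hw'
  obtain ⟨u, ⟨hu, y, hyu, hyA⟩, hwu⟩ := hw'
  rcases hu with ⟨g, rfl⟩ | ⟨k, rfl⟩ | ⟨α, rfl⟩
  · exact wit_ne_gnd (Set.mem_singleton_iff.1 hwu)
  · rcases mem_Hfull.1 hwu with h | ⟨δ, h⟩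
    · exact wit_ne_hub h
    · exact wit_ne_gnd h
  · have hbα : b = α := by
      rcases mem_Nset.1 hwu with h | ⟨k, _, hm⟩
      · exact wit_inj_iff.1 h
      · rcases mem_Hset.1 hm with h | ⟨δ, _, h⟩
        · exact absurd h wit_ne_hub
        · exact absurd h wit_ne_gnd
    subst hbα
    obtain ⟨n, hyn⟩ := Set.mem_iUnion.1 hyA
    rw [← hp n] at hyn
    rcases Set.mem_singleton_iff.1 hyn with rfl
    rcases mem_Nset.1 hyu with h | ⟨k, hk, hm⟩
    · exact gnd_ne_wit h
    · rcases mem_Hset.1 hm with h | ⟨δ, hδ, h⟩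
      · exact gnd_ne_hub h
      · have h3 : (p n).2 = δ := congrArg Prod.snd (gnd_inj_iff.1 h)
        exact absurd hδ (not_le.2 (h3 ▸ hb n))
end

end SelStarProof

/-- There is a Hausdorff space that is strongly `1`-star-Lindelöf but not
selectively star-ccc. -/
theorem exists_T2_SSL_not_selectively_star_ccc :
    ∃ (X : Type) (_ : TopologicalSpace X),
      T2Space X ∧ SSL X ∧ ¬ SelectivelyKStarCCC X 1 := by
  exact ⟨SelStarProof.Xs, SelStarProof.topX, SelStarProof.t2X, SelStarProof.sslX',
    SelStarProof.notselX⟩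
end
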